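/- In a modular operad, the composition operations ∘_f along a bijection f : U → V of d-element subsets can be recovered from single compositions and contractions: choosing any u ∈ U, the map ∘_f equals the composite of ∘_{u, f(u)} followed by the contractions c_{v, f(v)} for all v ∈ U \ {u}, and this is independent of the choice of u and of the order of the contractions. -/

import Mathlib

/-- A (graded) modular operad, modelled on finite subsets of `ℕ`: a collection
of spaces `M n X` (`n` the genus-like grading, `X` the labelling set), with
cyclic-operad compositions `∘_{x,y}`, a unit, and contraction operations
`c_{x,y}` raising the grading, satisfying the axioms of
Getzler–Kapranov/Hinich–Vaintrob (symmetry of contractions, commutation of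
independent contractions, compatibility of contractions with composition).
Operations are given totally; the axioms carry the relevant side conditions. -/
structure GradedModular where
  M : ℕ → Finset ℕ → Type
  unitEl : ∀ p q : ℕ, M 0 {p, q}
  comp : ∀ {m n : ℕ} {X Y : Finset ℕ} (x y : ℕ), M m X → M n Y →
    M (m + n) (((X ∪ Y).erase x).erase y)
  contr : ∀ {n : ℕ} {X : Finset ℕ} (x y : ℕ), M n X →
    M (n + 1) ((X.erase x).erase y)
  comp_comm : ∀ {m n : ℕ} {X Y : Finset ℕ} (x y : ℕ) (a : M m X) (b : M n Y),
    Disjoint X Y → x ∈ X → y ∈ Y → HEq (comp x y a b) (comp y x b a)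
  comp_assoc : ∀ {m n p : ℕ} {X Y Z : Finset ℕ} (x y y' z : ℕ)
    (a : M m X) (b : M n Y) (c : M p Z),
    Disjoint X Y → Disjoint X Z → Disjoint Y Z →
    x ∈ X → y ∈ Y → y' ∈ Y → z ∈ Z → y ≠ y' →
    HEq (comp y' z (comp x y a b) c) (comp x y a (comp y' z b c))
  comp_unit : ∀ {m : ℕ} {X : Finset ℕ} (x y : ℕ) (a : M m X),
    x ∈ X → y ∉ X → HEq (comp x y a (unitEl y x)) a
  contr_symm : ∀ {n : ℕ} {X : Finset ℕ} (x y : ℕ) (a : M n X),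
    HEq (contr x y a) (contr y x a)
  contr_contr : ∀ {n : ℕ} {X : Finset ℕ} (x y z t : ℕ) (a : M n X),
    x ∈ X → y ∈ X → z ∈ X → t ∈ X →
    x ≠ y → z ≠ t → x ≠ z → x ≠ t → y ≠ z → y ≠ t →
    HEq (contr x y (contr z t a)) (contr z t (contr x y a))
  contr_comp : ∀ {m n : ℕ} {X Y : Finset ℕ} (x₁ x₂ y₁ y₂ : ℕ)
    (a : M m X) (b : M n Y),
    Disjoint X Y → x₁ ∈ X → x₂ ∈ X → y₁ ∈ Y → y₂ ∈ Y → x₁ ≠ x₂ → y₁ ≠ y₂ →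
    ((X ∪ Y) \ {x₁, x₂, y₁, y₂}).Nonempty →
    HEq (contr x₁ y₁ (comp x₂ y₂ a b)) (contr x₂ y₂ (comp x₁ y₁ a b))

/-- The label set remaining after contracting the pairs `(v, f v)`, `v ∈ L`. -/
def eraseList (f : ℕ → ℕ) (L : List ℕ) (S : Finset ℕ) : Finset ℕ :=
  L.foldr (fun v T => (T.erase v).erase (f v)) S

/-- Iterated contraction of the pairs `(v, f v)` for `v` running through the
list `L`. -/
def iterContr (D : GradedModular) (f : ℕ → ℕ) :
    (L : List ℕ) → {n : ℕ} → {S : Finset ℕ} → D.M n S →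
      D.M (n + L.length) (eraseList f L S)
  | [], _, _, a => a
  | v :: L, _, _, a => D.contr v (f v) (iterContr D f L a)

/-!
For a fixed `u`, the contractions `c_{v, f v}`, `v ∈ U \ {u}`, involve pairwise disjoint pairs of
labels, so `contr_contr` makes their order irrelevant. For `u₁ ≠ u₂` we may therefore perform
`c_{u₂, f u₂}` first on `a ∘_{u₁, f u₁} b`, and `contr_comp` turns
`c_{u₂, f u₂} (a ∘_{u₁, f u₁} b)` into `c_{u₁, f u₁} (a ∘_{u₂, f u₂} b)`; a label outside `U ∪ V`
is exactly what its side condition asks for. The remaining contractions then coincide.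
-/

def pairLabels (f : ℕ → ℕ) (L : List ℕ) : List ℕ := L.flatMap fun v => [v, f v]

@[simp]
lemma pairLabels_cons (f : ℕ → ℕ) (v : ℕ) (L : List ℕ) :
    pairLabels f (v :: L) = v :: f v :: pairLabels f L := rfl

lemma List.Perm.pairLabels (f : ℕ → ℕ) {L₁ L₂ : List ℕ} (h : L₁.Perm L₂) :
    (pairLabels f L₁).Perm (pairLabels f L₂) :=
  h.flatMap_right _

lemma pairLabels_perm_append (f : ℕ → ℕ) (L : List ℕ) :
    (pairLabels f L).Perm (L ++ L.map f) := by
  induction L with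
  | nil => rfl
  | cons v L ih => simpa using ih.cons (f v) |>.trans List.perm_middle.symm |>.cons v

lemma nodup_pairLabels {f : ℕ → ℕ} {L : List ℕ} (hL : L.Nodup) (hinj : Set.InjOn f {v | v ∈ L})
    (hdisj : ∀ v ∈ L, ∀ w ∈ L, v ≠ f w) : (pairLabels f L).Nodup :=
  (pairLabels_perm_append f L).nodup_iff.2 <| List.nodup_append.2
    ⟨hL, hL.map_on fun _ hv _ hw h => hinj hv hw h, by simpa using hdisj⟩

lemma mem_eraseList {f : ℕ → ℕ} {L : List ℕ} {S : Finset ℕ} {x : ℕ} :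
    x ∈ eraseList f L S ↔ x ∈ S ∧ x ∉ pairLabels f L := by
  induction L with
  | nil => simp [eraseList, pairLabels]
  | cons v L ih =>
    simp only [eraseList, List.foldr_cons] at ih ⊢
    simp only [Finset.mem_erase, ih, pairLabels_cons, List.mem_cons]
    tauto

lemma eraseList_perm (f : ℕ → ℕ) {L₁ L₂ : List ℕ} (h : L₁.Perm L₂) (S : Finset ℕ) :
    eraseList f L₁ S = eraseList f L₂ S := by
  ext x
  simp only [mem_eraseList, (h.pairLabels f).mem_iff]

lemma eraseList_append_singleton (f : ℕ → ℕ) (L : List ℕ) (v : ℕ) (S : Finset ℕ) :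
    eraseList f (L ++ [v]) S = eraseList f L ((S.erase v).erase (f v)) := by
  simp [eraseList]

lemma List.perm_toList_erase_append_singleton {α : Type*} [DecidableEq α] {s : Finset α} {a : α}
    (ha : a ∈ s) {L : List α} (hL : L.Nodup) (hLs : L.toFinset = s) :
    L.Perm ((s.erase a).toList ++ [a]) :=
  List.perm_of_nodup_nodup_toFinset_eq hL
    (List.nodup_append.2 ⟨Finset.nodup_toList _, List.nodup_singleton a, by simp +contextual⟩)
    (by simp [hLs, Finset.insert_erase ha])

namespace GradedModular

section Contractions

variable (D : GradedModular) (f : ℕ → ℕ)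

lemma contr_congr (x y : ℕ) {n₁ n₂ : ℕ} {S₁ S₂ : Finset ℕ}
    (hn : n₁ = n₂) (hS : S₁ = S₂) {a₁ : D.M n₁ S₁} {a₂ : D.M n₂ S₂}
    (ha : HEq a₁ a₂) : HEq (D.contr x y a₁) (D.contr x y a₂) := by
  subst hn hS; cases ha; rfl

lemma iterContr_congr (L : List ℕ) {n : ℕ} {S₁ S₂ : Finset ℕ}
    (hS : S₁ = S₂) {a₁ : D.M n S₁} {a₂ : D.M n S₂}
    (ha : HEq a₁ a₂) : HEq (iterContr D f L a₁) (iterContr D f L a₂) := by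
  subst hS; cases ha; rfl

lemma iterContr_append_singleton (v : ℕ) :
    ∀ (L : List ℕ) {n : ℕ} {S : Finset ℕ} (a : D.M n S),
      HEq (iterContr D f (L ++ [v]) a) (iterContr D f L (D.contr v (f v) a))
  | [], _, _, _ => HEq.rfl
  | w :: L, _, S, a =>
    D.contr_congr w (f w) (by simp; omega) (eraseList_append_singleton f L v S)
      (iterContr_append_singleton v L a)

lemma iterContr_perm {L₁ L₂ : List ℕ} (h : L₁.Perm L₂) :
    ∀ {n : ℕ} {S : Finset ℕ} (a : D.M n S),
      (pairLabels f L₁).Nodup → (∀ x ∈ pairLabels f L₁, x ∈ S) →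
      HEq (iterContr D f L₁ a) (iterContr D f L₂ a) := by
  induction h with
  | nil => intro _ _ _ _ _; rfl
  | cons v h ih =>
    intro _ S a hnd hS
    rw [pairLabels_cons, List.nodup_cons, List.nodup_cons] at hnd
    exact D.contr_congr v (f v) (by rw [h.length_eq]) (eraseList_perm f h S)
      (ih a hnd.2.2 fun x hx => hS x (by simp [hx]))
  | swap x y l =>
    intro _ S a hnd hS
    change ([y, f y, x, f x] ++ pairLabels f l).Nodup at hnd
    change ∀ z ∈ [y, f y, x, f x] ++ pairLabels f l, z ∈ S at hS
    obtain ⟨hquad, -, hdisj⟩ := List.nodup_append.1 hnd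
    have hmem : ∀ z ∈ [y, f y, x, f x], z ∈ eraseList f l S := fun z hz =>
      mem_eraseList.2 ⟨hS z (List.mem_append_left _ hz), fun hzl => hdisj z hz z hzl rfl⟩
    obtain ⟨h₁, h₂, h₃, h₄, h₅, h₆⟩ :
        y ≠ f y ∧ x ≠ f x ∧ y ≠ x ∧ y ≠ f x ∧ f y ≠ x ∧ f y ≠ f x := by
      simp at hquad; tauto
    exact D.contr_contr y (f y) x (f x) (iterContr D f l a)
      (hmem _ (by simp)) (hmem _ (by simp)) (hmem _ (by simp)) (hmem _ (by simp))
      h₁ h₂ h₃ h₄ h₅ h₆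
  | trans hp _ ih₁ ih₂ =>
    intro _ _ a hnd hS
    have hp' := hp.pairLabels f
    exact (ih₁ a hnd hS).trans (ih₂ a (hp'.nodup_iff.1 hnd) fun x hx => hS x (hp'.mem_iff.2 hx))

end Contractions

variable {D : GradedModular} {m n : ℕ} {X Y U : Finset ℕ} {f : ℕ → ℕ}

lemma iterContr_comp_perm (hXY : Disjoint X Y) (hUX : U ⊆ X) (hfY : ∀ v ∈ U, f v ∈ Y)
    (hinj : Set.InjOn f U) (a : D.M m X) (b : D.M n Y) {u : ℕ} (hu : u ∈ U)
    {L₁ L₂ : List ℕ} (h : L₁.Perm L₂) (hL : L₁.Nodup) (hLU : ∀ v ∈ L₁, v ∈ U.erase u) :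
    HEq (iterContr D f L₁ (D.comp u (f u) a b)) (iterContr D f L₂ (D.comp u (f u) a b)) := by
  have hXYne : ∀ x ∈ X, ∀ y ∈ Y, x ≠ y := fun x hx y hy e =>
    Finset.disjoint_left.1 hXY hx (e ▸ hy)
  replace hLU : ∀ v ∈ L₁, v ≠ u ∧ v ∈ U := fun v hv => Finset.mem_erase.1 (hLU v hv)
  refine D.iterContr_perm f h _ (nodup_pairLabels hL ?_ ?_) ?_
  · exact fun v hv w hw => hinj (hLU v hv).2 (hLU w hw).2
  · exact fun v hv w hw => hXYne v (hUX (hLU v hv).2) _ (hfY w (hLU w hw).2)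
  · intro x hx
    obtain ⟨v, hv, hx⟩ := List.mem_flatMap.1 hx
    obtain ⟨hvu, hvU⟩ := hLU v hv
    simp only [List.mem_cons, List.not_mem_nil, or_false] at hx
    simp only [Finset.mem_erase, Finset.mem_union]
    rcases hx with rfl | rfl
    · exact ⟨hXYne _ (hUX hvU) _ (hfY u hu), hvu, Or.inl (hUX hvU)⟩
    · exact ⟨fun e => hvu (hinj hvU hu e), (hXYne _ (hUX hu) _ (hfY v hvU)).symm,
        Or.inr (hfY v hvU)⟩

lemma iterContr_append_comp_swap (hXY : Disjoint X Y) (a : D.M m X) (b : D.M n Y)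
    {u₁ u₂ : ℕ} (hu₁ : u₁ ∈ X) (hu₂ : u₂ ∈ X) (hfu₁ : f u₁ ∈ Y) (hfu₂ : f u₂ ∈ Y)
    (hu : u₁ ≠ u₂) (hfu : f u₁ ≠ f u₂) (hrem : ((X ∪ Y) \ {u₂, u₁, f u₂, f u₁}).Nonempty)
    (R : List ℕ) :
    HEq (iterContr D f (R ++ [u₂]) (D.comp u₁ (f u₁) a b))
      (iterContr D f (R ++ [u₁]) (D.comp u₂ (f u₂) a b)) :=
  (D.iterContr_append_singleton f u₂ R _).trans <|
    (D.iterContr_congr f R (by ext; simp only [Finset.mem_erase]; tauto)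
      (D.contr_comp u₂ u₁ (f u₂) (f u₁) a b hXY hu₂ hu₁ hfu₂ hfu₁ hu.symm hfu.symm hrem)).trans
    (D.iterContr_append_singleton f u₁ R _).symm

end GradedModular

open GradedModular

theorem modular_comp_along_bijection_well_defined_general
    (D : GradedModular) {m n : ℕ} {X Y : Finset ℕ} (hXY : Disjoint X Y)
    (U V : Finset ℕ) (hUX : U ⊆ X) (hVY : V ⊆ Y)
    (f : ℕ → ℕ) (hinj : Set.InjOn f U) (him : U.image f = V)
    (hrem : ((X \ U) ∪ (Y \ V)).Nonempty)
    (a : D.M m X) (b : D.M n Y)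
    (u₁ u₂ : ℕ) (hu₁ : u₁ ∈ U) (hu₂ : u₂ ∈ U)
    (L₁ L₂ : List ℕ) (h₁ : L₁.Nodup) (h₂ : L₂.Nodup)
    (hL₁ : L₁.toFinset = U.erase u₁) (hL₂ : L₂.toFinset = U.erase u₂) :
    HEq (iterContr D f L₁ (D.comp u₁ (f u₁) a b))
        (iterContr D f L₂ (D.comp u₂ (f u₂) a b)) := by
  have hfV : ∀ v ∈ U, f v ∈ V := fun v hv => him ▸ Finset.mem_image_of_mem f hv
  have hfY : ∀ v ∈ U, f v ∈ Y := fun v hv => hVY (hfV v hv)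
  have hL₁U : ∀ v ∈ L₁, v ∈ U.erase u₁ := fun v hv => hL₁ ▸ List.mem_toFinset.2 hv
  rcases eq_or_ne u₁ u₂ with rfl | hu
  · exact iterContr_comp_perm hXY hUX hfY hinj a b hu₁
      (List.perm_of_nodup_nodup_toFinset_eq h₁ h₂ (hL₁.trans hL₂.symm)) h₁ hL₁U
  have hfresh : ((X ∪ Y) \ {u₂, u₁, f u₂, f u₁}).Nonempty := by
    refine hrem.mono fun w hw => ?_
    have := Finset.disjoint_left.1 hXY
    grind
  set R := ((U.erase u₁).erase u₂).toList
  have hR₁ : L₁.Perm (R ++ [u₂]) :=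
    List.perm_toList_erase_append_singleton (Finset.mem_erase.2 ⟨hu.symm, hu₂⟩) h₁ hL₁
  have hR₂ : L₂.Perm (R ++ [u₁]) := by
    rw [show R = ((U.erase u₂).erase u₁).toList by rw [Finset.erase_right_comm]]
    exact List.perm_toList_erase_append_singleton (Finset.mem_erase.2 ⟨hu, hu₁⟩) h₂ hL₂
  exact (iterContr_comp_perm hXY hUX hfY hinj a b hu₁ hR₁ h₁ hL₁U).trans <|
    (iterContr_append_comp_swap hXY a b (hUX hu₁) (hUX hu₂) (hfY u₁ hu₁) (hfY u₂ hu₂) hu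
      (hinj.ne hu₁ hu₂ hu) hfresh R).trans <|
    (iterContr_comp_perm hXY hUX hfY hinj a b hu₂ hR₂ h₂
      fun v hv => hL₂ ▸ List.mem_toFinset.2 hv).symm

/-- In a modular operad, the composition `∘_f` along a bijection
`f : U → V` (`U ⊆ X`, `V ⊆ Y` non-empty) can be defined, for any choice of
`u ∈ U`, as the single composition `∘_{u, f u}` followed by the contractions
`c_{v, f v}` for `v ∈ U \ {u}` (in any order); the result is independent of
the choice of `u` and of the order of the contractions. -/
theorem modular_comp_along_bijection_well_defined
    (D : GradedModular) {m n : ℕ} {X Y : Finset ℕ} (hXY : Disjoint X Y)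
    (U V : Finset ℕ) (hUX : U ⊆ X) (hVY : V ⊆ Y) (hUne : U.Nonempty)
    (f : ℕ → ℕ) (hinj : Set.InjOn f U) (him : U.image f = V)
    (hrem : ((X \ U) ∪ (Y \ V)).Nonempty)
    (a : D.M m X) (b : D.M n Y)
    (u₁ u₂ : ℕ) (hu₁ : u₁ ∈ U) (hu₂ : u₂ ∈ U)
    (L₁ L₂ : List ℕ) (h₁ : L₁.Nodup) (h₂ : L₂.Nodup)
    (hL₁ : L₁.toFinset = U.erase u₁) (hL₂ : L₂.toFinset = U.erase u₂) :
    HEq (iterContr D f L₁ (D.comp u₁ (f u₁) a b))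
        (iterContr D f L₂ (D.comp u₂ (f u₂) a b)) :=
  modular_comp_along_bijection_well_defined_general D hXY U V hUX hVY f hinj him hrem a b u₁ u₂ hu₁
    hu₂ L₁ L₂ h₁ h₂ hL₁ hL₂
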